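/- arXiv:1508.06867 — 6 statements merged into one kernel-verified Lean document; each statement's English description precedes it below -/
import Mathlib

section
/- Let (Ω, ℱ, μ) be a probability space, 𝒢 a sub-σ-algebra of ℱ, A : Ω → ℝ a random variable, and ℋ = 𝒢 ⊔ σ(A). Let H, A ∈ L²(μ) and suppose the conditional mean independence identity μ[H | ℋ] = μ[H | 𝒢] holds μ-almost everywhere. Then μ[(H − μ[H|𝒢]) · (A − μ[A|𝒢]) | 𝒢] = 0 μ-almost everywhere. -/
open MeasureTheory

lemma memLp_two_condexp_aux {Ω : Type*} {mΩ : MeasurableSpace Ω}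
    (μ : Measure Ω) [IsFiniteMeasure μ]
    (m : MeasurableSpace Ω) (hm : m ≤ mΩ) {f : Ω → ℝ} (hf : MemLp f 2 μ) :
    MemLp (μ[f|m]) 2 μ := by
  haveI : IsFiniteMeasure (μ.trim hm) := isFiniteMeasure_trim hm
  have h : (((condExpL2 ℝ ℝ hm (hf.toLp f)) : Lp ℝ 2 μ) : Ω → ℝ) =ᵐ[μ] μ[f|m] := by
    refine ae_eq_condExp_of_forall_setIntegral_eq hm (hf.integrable one_le_two)
      (fun s hs hμs => integrableOn_condExpL2_of_measure_ne_top hm hμs.ne _)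
      (fun s hs hμs => ?_) (aestronglyMeasurable_condExpL2 hm _)
    rw [integral_condExpL2_eq hm (hf.toLp f) hs hμs.ne]
    exact integral_congr_ae (ae_restrict_of_ae hf.coeFn_toLp)
  exact (Lp.memLp _).ae_eq h

/-- Conditional mean independence of `H` from `A` given `𝒢` implies that the product of the
centered variables has conditional mean zero given `𝒢`: the conditional unbiasedness of the
coarse structural nested mean model estimating function. -/
theorem stmt_2 {Ω : Type*} (𝒢 : MeasurableSpace Ω) {mΩ : MeasurableSpace Ω}
    (μ : Measure Ω) [IsProbabilityMeasure μ]
    (h𝒢 : 𝒢 ≤ mΩ)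
    (A H : Ω → ℝ) (hA : Measurable A)
    (hH2 : MemLp H 2 μ) (hA2 : MemLp A 2 μ)
    (hCMI : μ[H | 𝒢 ⊔ MeasurableSpace.comap A inferInstance] =ᵐ[μ] μ[H | 𝒢]) :
    μ[fun ω => (H ω - (μ[H | 𝒢]) ω) * (A ω - (μ[A | 𝒢]) ω) | 𝒢] =ᵐ[μ] 0 := by
  set ℋ := 𝒢 ⊔ MeasurableSpace.comap A inferInstance with hℋdef
  have hcomap : MeasurableSpace.comap A inferInstance ≤ mΩ := (Measurable.comap_le hA)
  have hℋ : ℋ ≤ mΩ := sup_le h𝒢 hcomap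
  have h𝒢ℋ : 𝒢 ≤ ℋ := le_sup_left
  haveI : SigmaFinite (μ.trim hℋ) := by
    haveI : IsFiniteMeasure (μ.trim hℋ) := isFiniteMeasure_trim hℋ
    infer_instance
  haveI : SigmaFinite (μ.trim h𝒢) := by
    haveI : IsFiniteMeasure (μ.trim h𝒢) := isFiniteMeasure_trim h𝒢
    infer_instance
  -- the centered variables
  set f : Ω → ℝ := fun ω => A ω - (μ[A | 𝒢]) ω with hfdef
  set g : Ω → ℝ := fun ω => H ω - (μ[H | 𝒢]) ω with hgdef
  -- measurability of f with respect to ℋ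
  have hAℋ : Measurable[ℋ] A := measurable_iff_comap_le.mpr le_sup_right
  have hf_meas : StronglyMeasurable[ℋ] f :=
    hAℋ.stronglyMeasurable.sub (stronglyMeasurable_condExp.mono h𝒢ℋ)
  -- L² membership
  have hH𝒢2 : MemLp (μ[H | 𝒢]) 2 μ := memLp_two_condexp_aux μ 𝒢 h𝒢 hH2
  have hA𝒢2 : MemLp (μ[A | 𝒢]) 2 μ := memLp_two_condexp_aux μ 𝒢 h𝒢 hA2
  have hf2 : MemLp f 2 μ := hA2.sub hA𝒢2
  have hg2 : MemLp g 2 μ := hH2.sub hH𝒢2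
  -- integrability
  have hg_int : Integrable g μ := hg2.integrable one_le_two
  have hfg_int : Integrable (f * g) μ := by
    rw [← memLp_one_iff_integrable]
    have := hg2.smul (φ := f) hf2 (p := 2) (q := 2) (r := 1) (hpqr := ⟨by rw [ENNReal.inv_two_add_inv_two, inv_one]⟩)
    simpa [smul_eq_mul] using this
  -- conditional expectation of g with respect to ℋ is zero
  have hgℋ : μ[g | ℋ] =ᵐ[μ] 0 := by
    have h1 : μ[g | ℋ] =ᵐ[μ] μ[H | ℋ] - μ[μ[H | 𝒢] | ℋ] :=
      condExp_sub (hH2.integrable one_le_two) (hH𝒢2.integrable one_le_two) _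
    have h2 : μ[μ[H | 𝒢] | ℋ] =ᵐ[μ] μ[H | 𝒢] := by
      rw [condExp_of_stronglyMeasurable hℋ (stronglyMeasurable_condExp.mono h𝒢ℋ)
        (hH𝒢2.integrable one_le_two)]
    filter_upwards [h1, h2, hCMI] with ω h1ω h2ω hCMIω
    simp only [h1ω, Pi.sub_apply, h2ω, Pi.zero_apply]
    rw [hCMIω, sub_self]
  -- pull-out property
  have hpull : μ[f * g | ℋ] =ᵐ[μ] f * μ[g | ℋ] :=
    condExp_mul_of_stronglyMeasurable_left hf_meas hfg_int hg_int
  have hzero : μ[f * g | ℋ] =ᵐ[μ] 0 := by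
    filter_upwards [hpull, hgℋ] with ω h1ω h2ω
    simp [h1ω, h2ω]
  -- tower property
  have htower : μ[f * g | 𝒢] =ᵐ[μ] μ[μ[f * g | ℋ] | 𝒢] :=
    (condExp_condExp_of_le h𝒢ℋ hℋ).symm
  have : μ[f * g | 𝒢] =ᵐ[μ] 0 := by
    refine htower.trans ?_
    calc μ[μ[f * g | ℋ] | 𝒢] =ᵐ[μ] μ[(0 : Ω → ℝ) | 𝒢] := condExp_congr_ae hzero
    _ = 0 := condExp_zero
  refine Filter.EventuallyEq.trans ?_ this
  refine condExp_congr_ae (Filter.Eventually.of_forall fun ω => ?_)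
  simp [hfdef, hgdef, mul_comm]
end

section
/- Let (Ω, ℱ, μ) be a probability space, 𝒢 a sub-σ-algebra of ℱ, A : Ω → ℝ a random variable, and ℋ = 𝒢 ⊔ σ(A). Let H, A ∈ L²(μ) satisfy the conditional mean independence identity μ[H | ℋ] = μ[H | 𝒢] μ-almost everywhere. Then for every bounded 𝒢-measurable q : Ω → ℝ and every bounded 𝒢-measurable h : Ω → ℝ (a possibly misspecified outcome regression model), ∫ q · (H − h) · (A − μ[A|𝒢]) dμ = 0. -/
open MeasureTheory

private lemma two_mul_L1 {Ω : Type*} {m0 : MeasurableSpace Ω} {μ : Measure Ω}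
    {f g : Ω → ℝ} (hf : MemLp f 2 μ) (hg : MemLp g 2 μ) :
    Integrable (fun ω => f ω * g ω) μ := by
  rw [← memLp_one_iff_integrable]
  have h := hg.smul (φ := f) hf (r := 1) (hpqr := ⟨by
    rw [ENNReal.inv_two_add_inv_two, inv_one]⟩)
  exact h

private lemma memℒp_two_condexp' {Ω : Type*} {m m0 : MeasurableSpace Ω} (hm : m ≤ m0)
    {μ : Measure Ω} [IsFiniteMeasure μ] {f : Ω → ℝ} (hf : MemLp f 2 μ) :
    MemLp (μ[f|m]) 2 μ := by
  have hfi : Integrable f μ := hf.integrable one_le_two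
  set F := hf.toLp f with hF
  have hFf : (F : Ω → ℝ) =ᵐ[μ] f := hf.coeFn_toLp
  have hg : MemLp ((condExpL2 ℝ ℝ hm F : Lp ℝ 2 μ) : Ω → ℝ) 2 μ := Lp.memLp _
  have heq : ((condExpL2 ℝ ℝ hm F : Lp ℝ 2 μ) : Ω → ℝ) =ᵐ[μ] μ[f|m] := by
    refine ae_eq_condExp_of_forall_setIntegral_eq hm hfi
      (fun s _ _ => (hg.integrable one_le_two).integrableOn) (fun s hs hμs => ?_) ?_
    · rw [integral_condExpL2_eq hm F hs hμs.ne]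
      exact setIntegral_congr_ae (hm s hs) (hFf.mono fun x hx _ => hx)
    · exact lpMeas.aestronglyMeasurable _
  exact hg.ae_eq heq

private lemma integral_mul_sub_condexp' {Ω : Type*} {m m0 : MeasurableSpace Ω} (hm : m ≤ m0)
    {μ : Measure Ω} [IsProbabilityMeasure μ] {g A : Ω → ℝ}
    (hg : StronglyMeasurable[m] g) (hgA : Integrable (fun ω => g ω * A ω) μ)
    (hA : Integrable A μ) :
    ∫ ω, g ω * (A ω - (μ[A|m]) ω) ∂μ = 0 := by
  have hpull : μ[g * A|m] =ᵐ[μ] g * μ[A|m] :=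
    condExp_mul_of_stronglyMeasurable_left hg hgA hA
  have hgc : Integrable (fun ω => g ω * (μ[A|m]) ω) μ :=
    (integrable_condExp (f := g * A)).congr hpull
  have h1 : ∫ ω, g ω * A ω ∂μ = ∫ ω, g ω * (μ[A|m]) ω ∂μ := by
    rw [show (∫ ω, g ω * A ω ∂μ) = ∫ ω, (g * A) ω ∂μ from rfl,
      ← integral_condExp hm (f := g * A)]
    exact integral_congr_ae hpull
  have : ∀ ω, g ω * (A ω - (μ[A|m]) ω) = g ω * A ω - g ω * (μ[A|m]) ω := fun ω => by ring
  simp only [this]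
  rw [integral_sub hgA hgc, h1, sub_self]

/-- Half of double robustness: with a correct treatment initiation model `μ[A|𝒢]`, the estimating
function is unbiased for any bounded `𝒢`-measurable outcome regression model `h`. -/
theorem stmt_4 {Ω : Type*} (𝒢 : MeasurableSpace Ω) {mΩ : MeasurableSpace Ω}
    (μ : Measure Ω) [IsProbabilityMeasure μ]
    (h𝒢 : 𝒢 ≤ mΩ)
    (A H : Ω → ℝ) (hA : Measurable A)
    (hH2 : MemLp H 2 μ) (hA2 : MemLp A 2 μ)
    (hCMI : μ[H | 𝒢 ⊔ MeasurableSpace.comap A inferInstance] =ᵐ[μ] μ[H | 𝒢])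
    (q h : Ω → ℝ) (hq : Measurable[𝒢] q) (hqbdd : ∃ C, ∀ ω, |q ω| ≤ C)
    (hh : Measurable[𝒢] h) (hhbdd : ∃ C, ∀ ω, |h ω| ≤ C) :
    ∫ ω, q ω * (H ω - h ω) * (A ω - (μ[A | 𝒢]) ω) ∂μ = 0 := by
  obtain ⟨Cq, hCq⟩ := hqbdd
  obtain ⟨Ch, hCh⟩ := hhbdd
  set ℋ := 𝒢 ⊔ MeasurableSpace.comap A inferInstance with hℋdef
  have hℋ : ℋ ≤ mΩ := sup_le h𝒢 (measurable_iff_comap_le.mp hA)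
  set c := μ[A | 𝒢] with hc
  -- basic measurability
  have hqG : StronglyMeasurable[𝒢] q := hq.stronglyMeasurable
  have hhG : StronglyMeasurable[𝒢] h := hh.stronglyMeasurable
  have hqTop : MemLp q ⊤ μ :=
    memLp_top_of_bound ((hqG.mono h𝒢).aestronglyMeasurable) Cq
      (Filter.Eventually.of_forall fun ω => by simpa [Real.norm_eq_abs] using hCq ω)
  have hh2 : MemLp h 2 μ :=
    (memLp_top_of_bound ((hhG.mono h𝒢).aestronglyMeasurable) Ch
      (Filter.Eventually.of_forall fun ω => by
        simpa [Real.norm_eq_abs] using hCh ω)).mono_exponent le_top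
  have hc2 : MemLp c 2 μ := memℒp_two_condexp' h𝒢 hA2
  have hAc2 : MemLp (fun ω => A ω - c ω) 2 μ := hA2.sub hc2
  -- K = q * (A - c)
  set K : Ω → ℝ := fun ω => q ω * (A ω - c ω) with hKdef
  have hK2 : MemLp K 2 μ := by
    have := hAc2.smul hqTop (r := 2)
    exact this
  -- measurability of K w.r.t. ℋ
  have hqℋ : StronglyMeasurable[ℋ] q := hqG.mono le_sup_left
  have hAℋ : Measurable[ℋ] A := measurable_iff_comap_le.mpr le_sup_right
  have hcℋ : StronglyMeasurable[ℋ] c :=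
    (stronglyMeasurable_condExp (f := A) (m := 𝒢)).mono le_sup_left
  have hKℋ : StronglyMeasurable[ℋ] K :=
    hqℋ.mul (hAℋ.stronglyMeasurable.sub hcℋ)
  -- condexp of H at 𝒢 in L²
  have hEH2 : MemLp (μ[H | 𝒢]) 2 μ := memℒp_two_condexp' h𝒢 hH2
  -- integrabilities
  have I1 : Integrable (fun ω => H ω * K ω) μ := two_mul_L1 hH2 hK2
  have I2 : Integrable (fun ω => q ω * h ω * (A ω - c ω)) μ := by
    have hqh2 : MemLp (fun ω => q ω * h ω) 2 μ := by
      have := hh2.smul hqTop (r := 2)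
      exact this
    exact two_mul_L1 hqh2 hAc2
  have I3 : Integrable (fun ω => K ω * (μ[H | 𝒢]) ω) μ := two_mul_L1 hK2 hEH2
  -- Step A : split the integral
  have hsplit : ∀ ω, q ω * (H ω - h ω) * (A ω - c ω)
      = H ω * K ω - q ω * h ω * (A ω - c ω) := fun ω => by
    simp only [hKdef]; ring
  -- Step B : ∫ H*K = ∫ K * μ[H|𝒢]
  have hKH : Integrable (K * H) μ := by
    have := two_mul_L1 hK2 hH2
    exact this
  have hpull : μ[K * H | ℋ] =ᵐ[μ] K * μ[H | ℋ] :=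
    condExp_mul_of_stronglyMeasurable_left hKℋ hKH (hH2.integrable one_le_two)
  have hB : ∫ ω, H ω * K ω ∂μ = ∫ ω, K ω * (μ[H | 𝒢]) ω ∂μ := by
    have e1 : ∫ ω, H ω * K ω ∂μ = ∫ ω, (K * H) ω ∂μ := by
      refine integral_congr_ae (Filter.Eventually.of_forall fun ω => ?_)
      simp [mul_comm]
    rw [e1, ← integral_condExp hℋ (f := K * H)]
    refine integral_congr_ae (hpull.trans ?_)
    filter_upwards [hCMI] with ω hω
    simp only [Pi.mul_apply, hℋdef]
    rw [hω]
  -- Step C : the remaining integrand is 𝒢-orthogonal to A - c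
  have hg2 : MemLp (fun ω => q ω * ((μ[H | 𝒢]) ω - h ω)) 2 μ := by
    have := (hEH2.sub hh2).smul hqTop (r := 2)
    exact this
  have hgG : StronglyMeasurable[𝒢] (fun ω => q ω * ((μ[H | 𝒢]) ω - h ω)) :=
    hqG.mul ((stronglyMeasurable_condExp (f := H) (m := 𝒢)).sub hhG)
  have hgA : Integrable (fun ω => q ω * ((μ[H | 𝒢]) ω - h ω) * A ω) μ :=
    two_mul_L1 hg2 hA2
  have hC : ∫ ω, q ω * ((μ[H | 𝒢]) ω - h ω) * (A ω - c ω) ∂μ = 0 :=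
    integral_mul_sub_condexp' h𝒢 hgG hgA (hA2.integrable one_le_two)
  -- put everything together
  calc ∫ ω, q ω * (H ω - h ω) * (A ω - c ω) ∂μ
      = ∫ ω, (H ω * K ω - q ω * h ω * (A ω - c ω)) ∂μ := by
        exact integral_congr_ae (Filter.Eventually.of_forall fun ω => hsplit ω)
    _ = ∫ ω, H ω * K ω ∂μ - ∫ ω, q ω * h ω * (A ω - c ω) ∂μ := integral_sub I1 I2
    _ = ∫ ω, K ω * (μ[H | 𝒢]) ω ∂μ - ∫ ω, q ω * h ω * (A ω - c ω) ∂μ := by rw [hB]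
    _ = ∫ ω, (K ω * (μ[H | 𝒢]) ω - q ω * h ω * (A ω - c ω)) ∂μ := (integral_sub I3 I2).symm
    _ = ∫ ω, q ω * ((μ[H | 𝒢]) ω - h ω) * (A ω - c ω) ∂μ := by
        refine integral_congr_ae (Filter.Eventually.of_forall fun ω => ?_)
        simp only [hKdef]; ring
    _ = 0 := hC
end

section
/- Let (Ω, ℱ, μ) be a probability space, 𝒢 a sub-σ-algebra of ℱ, A : Ω → ℝ a random variable, and ℋ = 𝒢 ⊔ σ(A). Let H, A ∈ L²(μ) satisfy the conditional mean independence identity μ[H | ℋ] = μ[H | 𝒢] μ-almost everywhere. Then for every bounded 𝒢-measurable q : Ω → ℝ and every bounded 𝒢-measurable p : Ω → ℝ (a possibly misspecified treatment initiation model), ∫ q · (H − μ[H|𝒢]) · (A − p) dμ = 0. -/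
open MeasureTheory

/-- Other half of double robustness: with a correct outcome regression model `μ[H|𝒢]`, the
estimating function is unbiased for any bounded `𝒢`-measurable treatment initiation model `p`. -/
theorem stmt_5 {Ω : Type*} (𝒢 : MeasurableSpace Ω) {mΩ : MeasurableSpace Ω}
    (μ : Measure Ω) [IsProbabilityMeasure μ]
    (h𝒢 : 𝒢 ≤ mΩ)
    (A H : Ω → ℝ) (hA : Measurable A)
    (hH2 : MemLp H 2 μ) (hA2 : MemLp A 2 μ)
    (hCMI : μ[H | 𝒢 ⊔ MeasurableSpace.comap A inferInstance] =ᵐ[μ] μ[H | 𝒢])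
    (q p : Ω → ℝ) (hq : Measurable[𝒢] q) (hqbdd : ∃ C, ∀ ω, |q ω| ≤ C)
    (hp : Measurable[𝒢] p) (hpbdd : ∃ C, ∀ ω, |p ω| ≤ C) :
    ∫ ω, q ω * (H ω - (μ[H | 𝒢]) ω) * (A ω - p ω) ∂μ = 0 := by
  set ℋ : MeasurableSpace Ω := 𝒢 ⊔ MeasurableSpace.comap A inferInstance with hℋdef
  have hℋ : ℋ ≤ mΩ := sup_le h𝒢 (fun s hs => by obtain ⟨t, ht, rfl⟩ := hs; exact hA ht)
  -- p is bounded, hence in L²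
  obtain ⟨Cp, hCp⟩ := hpbdd
  have hp2 : MemLp p 2 μ := MemLp.of_bound ((hp.mono h𝒢 le_rfl).stronglyMeasurable.aestronglyMeasurable)
    Cp (Filter.Eventually.of_forall fun ω => by simpa using hCp ω)
  -- f = q * (A - p) is ℋ-strongly measurable
  set f : Ω → ℝ := fun ω => q ω * (A ω - p ω) with hfdef
  have hAmeas : Measurable[MeasurableSpace.comap A inferInstance] A :=
    Measurable.of_comap_le le_rfl
  have hfmeas : Measurable[ℋ] f :=
    ((hq.mono le_sup_left le_rfl)).mul
      ((hAmeas.mono le_sup_right le_rfl).sub (hp.mono le_sup_left le_rfl))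
  -- (A - p) * H is integrable (L² · L²)
  have hAp2 : MemLp (fun ω => A ω - p ω) 2 μ := hA2.sub hp2
  have hApH : Integrable (fun ω => (A ω - p ω) * H ω) μ := by
    rw [← memLp_one_iff_integrable]
    have := hH2.smul (𝕜 := ℝ) hAp2 (p := 2) (q := 2) (r := 1)
    simpa [smul_eq_mul, Pi.mul_def] using this
  -- f * H integrable
  have hfH : Integrable (fun ω => f ω * H ω) μ := by
    have : Integrable (fun ω => q ω * ((A ω - p ω) * H ω)) μ := by
      obtain ⟨Cq, hCq⟩ := hqbdd
      exact hApH.bdd_mul ((hq.mono h𝒢 le_rfl).stronglyMeasurable.aestronglyMeasurable)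
        (c := Cq) (Filter.Eventually.of_forall fun ω => by simpa using hCq ω)
    exact this.congr (Filter.Eventually.of_forall fun ω => by simp [hfdef, mul_assoc])
  have hHint : Integrable H μ := hH2.integrable one_le_two
  -- pull-out property
  have hpull : μ[f * H | ℋ] =ᵐ[μ] f * μ[H | ℋ] :=
    condExp_mul_of_stronglyMeasurable_left hfmeas.stronglyMeasurable hfH hHint
  have hpull' : μ[f * H | ℋ] =ᵐ[μ] fun ω => f ω * (μ[H | 𝒢]) ω :=
    hpull.trans (hCMI.mono fun ω hω => by simp [hω])
  -- f · μ[H|𝒢] is integrable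
  have hfE : Integrable (fun ω => f ω * (μ[H | 𝒢]) ω) μ :=
    (integrable_condExp (m := ℋ)).congr hpull'
  -- integrals agree
  have hint : ∫ ω, f ω * (μ[H | 𝒢]) ω ∂μ = ∫ ω, f ω * H ω ∂μ := by
    rw [← integral_congr_ae hpull', integral_condExp hℋ]
    rfl
  have : ∫ ω, q ω * (H ω - (μ[H | 𝒢]) ω) * (A ω - p ω) ∂μ
      = ∫ ω, (f ω * H ω - f ω * (μ[H | 𝒢]) ω) ∂μ := by
    apply integral_congr_ae
    filter_upwards with ω
    simp only [hfdef]; ring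
  rw [this, integral_sub hfH hfE, hint, sub_self]
end

section
/- Let (Ω, ℱ, μ) be a probability space, 𝒢 a sub-σ-algebra of ℱ, A : Ω → ℝ a random variable, and ℋ = 𝒢 ⊔ σ(A). Let H, A ∈ L²(μ) satisfy the conditional mean independence identity μ[H | ℋ] = μ[H | 𝒢] μ-almost everywhere, and let q, h, p : Ω → ℝ be bounded 𝒢-measurable functions. If either h = μ[H|𝒢] μ-almost everywhere or p = μ[A|𝒢] μ-almost everywhere, then ∫ q · (H − h) · (A − p) dμ = 0. -/
open MeasureTheory

/-- Doubly robust unbiasedness: under conditional mean independence of `H` from `A` given `𝒢`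
(a correctly specified treatment effect model), the estimating function has mean zero if either
the outcome regression model `h` or the treatment initiation model `p` is correctly specified. -/
theorem stmt_6 {Ω : Type*} (𝒢 : MeasurableSpace Ω) {mΩ : MeasurableSpace Ω}
    (μ : Measure Ω) [IsProbabilityMeasure μ]
    (h𝒢 : 𝒢 ≤ mΩ)
    (A H : Ω → ℝ) (hA : Measurable A)
    (hH2 : MemLp H 2 μ) (hA2 : MemLp A 2 μ)
    (hCMI : μ[H | 𝒢 ⊔ MeasurableSpace.comap A inferInstance] =ᵐ[μ] μ[H | 𝒢])
    (q h p : Ω → ℝ)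
    (hq : Measurable[𝒢] q) (hqbdd : ∃ C, ∀ ω, |q ω| ≤ C)
    (hh : Measurable[𝒢] h) (hhbdd : ∃ C, ∀ ω, |h ω| ≤ C)
    (hp : Measurable[𝒢] p) (hpbdd : ∃ C, ∀ ω, |p ω| ≤ C)
    (hDR : h =ᵐ[μ] μ[H | 𝒢] ∨ p =ᵐ[μ] μ[A | 𝒢]) :
    ∫ ω, q ω * (H ω - h ω) * (A ω - p ω) ∂μ = 0 := by
  obtain ⟨Cq, hCq⟩ := hqbdd
  obtain ⟨Ch, hCh⟩ := hhbdd
  obtain ⟨Cp, hCp⟩ := hpbdd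
  set m : MeasurableSpace Ω := 𝒢 ⊔ MeasurableSpace.comap A inferInstance with hm_def
  have hm : m ≤ mΩ := sup_le h𝒢 hA.comap_le
  haveI : SigmaFinite (μ.trim hm) := by
    haveI : IsFiniteMeasure (μ.trim hm) := isFiniteMeasure_trim hm
    infer_instance
  haveI : SigmaFinite (μ.trim h𝒢) := by
    haveI : IsFiniteMeasure (μ.trim h𝒢) := isFiniteMeasure_trim h𝒢
    infer_instance
  have hqM : Measurable[mΩ] q := hq.mono h𝒢 le_rfl
  have hhM : Measurable[mΩ] h := hh.mono h𝒢 le_rfl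
  have hpM : Measurable[mΩ] p := hp.mono h𝒢 le_rfl
  have hqTop : MemLp q ⊤ μ := memLp_top_of_bound hqM.aestronglyMeasurable Cq
    (Filter.Eventually.of_forall fun ω => by simpa [Real.norm_eq_abs] using hCq ω)
  have hhTop : MemLp h ⊤ μ := memLp_top_of_bound hhM.aestronglyMeasurable Ch
    (Filter.Eventually.of_forall fun ω => by simpa [Real.norm_eq_abs] using hCh ω)
  have hpTop : MemLp p ⊤ μ := memLp_top_of_bound hpM.aestronglyMeasurable Cp
    (Filter.Eventually.of_forall fun ω => by simpa [Real.norm_eq_abs] using hCp ω)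
  have hh2 : MemLp h 2 μ := hhTop.mono_exponent le_top
  have hp2 : MemLp p 2 μ := hpTop.mono_exponent le_top
  have hHh2 : MemLp (fun ω => H ω - h ω) 2 μ := hH2.sub hh2
  have hAp2 : MemLp (fun ω => A ω - p ω) 2 μ := hA2.sub hp2
  have hg2 : MemLp (fun ω => q ω * (A ω - p ω)) 2 μ := by
    have := hAp2.smul hqTop (r := 2)
    simpa [smul_eq_mul, Pi.mul_def] using this
  have hHint : Integrable H μ := hH2.integrable one_le_two
  have hhInt : Integrable h μ := hh2.integrable one_le_two
  have hHhInt : Integrable (fun ω => H ω - h ω) μ := hHh2.integrable one_le_two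
  have hApInt : Integrable (fun ω => A ω - p ω) μ := hAp2.integrable one_le_two
  have hprod1 : Integrable (fun ω => q ω * (A ω - p ω) * (H ω - h ω)) μ := by
    have := hHh2.smul hg2 (r := 1)
    exact memLp_one_iff_integrable.mp (by simpa [smul_eq_mul, Pi.mul_def] using this)
  -- measurability w.r.t. m
  have hAm : Measurable[m] A := by
    have : Measurable[MeasurableSpace.comap A inferInstance] A :=
      measurable_iff_comap_le.mpr le_rfl
    exact this.mono le_sup_right le_rfl
  have hqm : Measurable[m] q := hq.mono le_sup_left le_rfl
  have hpm : Measurable[m] p := hp.mono le_sup_left le_rfl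
  have hhm : Measurable[m] h := hh.mono le_sup_left le_rfl
  have hgm : StronglyMeasurable[m] (fun ω => q ω * (A ω - p ω)) :=
    (hqm.mul (hAm.sub hpm)).stronglyMeasurable
  -- conditional expectation of H - h given m
  have hEHm : μ[(fun ω => H ω - h ω) | m] =ᵐ[μ] fun ω => (μ[H | 𝒢]) ω - h ω := by
    have h1 : μ[(fun ω => H ω - h ω) | m] =ᵐ[μ] μ[H | m] - μ[h | m] := by
      have := condExp_sub (m := m) (μ := μ) hHint hhInt
      exact this
    have h2 : μ[h | m] = h := condExp_of_stronglyMeasurable hm hhm.stronglyMeasurable hhInt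
    filter_upwards [h1, hCMI] with ω h1ω h2ω
    rw [h1ω, Pi.sub_apply, h2, h2ω]
  -- pull-out for m
  have keyA : μ[(fun ω => q ω * (A ω - p ω) * (H ω - h ω)) | m]
      =ᵐ[μ] fun ω => q ω * (A ω - p ω) * ((μ[H | 𝒢]) ω - h ω) := by
    have hmul : μ[(fun ω => q ω * (A ω - p ω) * (H ω - h ω)) | m]
        =ᵐ[μ] fun ω => q ω * (A ω - p ω) * (μ[(fun ω => H ω - h ω) | m]) ω :=
      condExp_mul_of_stronglyMeasurable_left hgm hprod1 hHhInt
    filter_upwards [hmul, hEHm] with ω hω h2ω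
    rw [hω, h2ω]
  have step1 : ∫ ω, q ω * (H ω - h ω) * (A ω - p ω) ∂μ
      = ∫ ω, q ω * (A ω - p ω) * ((μ[H | 𝒢]) ω - h ω) ∂μ := by
    have e1 : ∫ ω, q ω * (H ω - h ω) * (A ω - p ω) ∂μ
        = ∫ ω, q ω * (A ω - p ω) * (H ω - h ω) ∂μ :=
      integral_congr_ae (Filter.Eventually.of_forall fun ω => by ring)
    rw [e1, ← integral_condExp hm]
    exact integral_congr_ae keyA
  rcases hDR with hDRh | hDRp
  · rw [step1]
    have : (fun ω => q ω * (A ω - p ω) * ((μ[H | 𝒢]) ω - h ω)) =ᵐ[μ] 0 := by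
      filter_upwards [hDRh] with ω hω
      simp [← hω]
    rw [integral_congr_ae this]
    simp
  · -- second case: condition further on 𝒢
    have hfsm : StronglyMeasurable[𝒢] (fun ω => q ω * ((μ[H | 𝒢]) ω - h ω)) :=
      hq.stronglyMeasurable.mul (stronglyMeasurable_condExp.sub hh.stronglyMeasurable)
    have hfApInt : Integrable (fun ω => q ω * ((μ[H | 𝒢]) ω - h ω) * (A ω - p ω)) μ := by
      refine (integrable_condExp (m := m) (μ := μ)
        (f := fun ω => q ω * (A ω - p ω) * (H ω - h ω))).congr ?_
      filter_upwards [keyA] with ω hω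
      rw [hω]; ring
    have hEAg : μ[(fun ω => A ω - p ω) | 𝒢] =ᵐ[μ] fun ω => (μ[A | 𝒢]) ω - p ω := by
      have h1 : μ[(fun ω => A ω - p ω) | 𝒢] =ᵐ[μ] μ[A | 𝒢] - μ[p | 𝒢] := by
        have := condExp_sub (m := 𝒢) (μ := μ) (hA2.integrable one_le_two)
          (hp2.integrable one_le_two)
        exact this
      have h2 : μ[p | 𝒢] = p :=
        condExp_of_stronglyMeasurable h𝒢 hp.stronglyMeasurable (hp2.integrable one_le_two)
      filter_upwards [h1] with ω h1ω
      rw [h1ω, Pi.sub_apply, h2]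
    have keyB : μ[(fun ω => q ω * ((μ[H | 𝒢]) ω - h ω) * (A ω - p ω)) | 𝒢]
        =ᵐ[μ] fun ω => q ω * ((μ[H | 𝒢]) ω - h ω) * ((μ[A | 𝒢]) ω - p ω) := by
      have hmul : μ[(fun ω => q ω * ((μ[H | 𝒢]) ω - h ω) * (A ω - p ω)) | 𝒢]
          =ᵐ[μ] fun ω => q ω * ((μ[H | 𝒢]) ω - h ω) * (μ[(fun ω => A ω - p ω) | 𝒢]) ω :=
        condExp_mul_of_stronglyMeasurable_left hfsm hfApInt hApInt
      filter_upwards [hmul, hEAg] with ω hω h2ω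
      rw [hω, h2ω]
    have step2 : ∫ ω, q ω * (A ω - p ω) * ((μ[H | 𝒢]) ω - h ω) ∂μ
        = ∫ ω, q ω * ((μ[H | 𝒢]) ω - h ω) * ((μ[A | 𝒢]) ω - p ω) ∂μ := by
      have e2 : ∫ ω, q ω * (A ω - p ω) * ((μ[H | 𝒢]) ω - h ω) ∂μ
          = ∫ ω, q ω * ((μ[H | 𝒢]) ω - h ω) * (A ω - p ω) ∂μ :=
        integral_congr_ae (Filter.Eventually.of_forall fun ω => by ring)
      rw [e2, ← integral_condExp h𝒢]
      exact integral_congr_ae keyB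
    rw [step1, step2]
    have : (fun ω => q ω * ((μ[H | 𝒢]) ω - h ω) * ((μ[A | 𝒢]) ω - p ω)) =ᵐ[μ] 0 := by
      filter_upwards [hDRp] with ω hω
      simp [← hω]
    rw [integral_congr_ae this]
    simp
end

section
/- Let (Ω, ℱ, μ) be a probability space, 𝒢 a sub-σ-algebra of ℱ, C ∈ ℱ an event, and X : Ω → ℝ a bounded measurable random variable. Let p = μ[1_C | 𝒢] and suppose that μ[1_C | 𝒢 ⊔ σ(X)] = p μ-almost everywhere and p > 0 μ-almost everywhere. Then ∫ (1_C / p) · X dμ = ∫ X dμ. In particular, if ∫ X dμ = 0 (X is an unbiased estimating function), then the inverse-probability-of-censoring-weighted estimating function (1_C / p) · X also has mean zero. -/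
open MeasureTheory

/-- Key identity: for `f` strongly measurable w.r.t. a sub-σ-algebra `m'` satisfying the MAR
condition, if `f * 1_C` is integrable then `∫ f * 1_C = ∫ f * p`. -/
theorem aux_pullout {Ω : Type*} {m' : MeasurableSpace Ω} {mΩ : MeasurableSpace Ω}
    (hm' : m' ≤ mΩ) (μ : @Measure Ω mΩ) [IsProbabilityMeasure μ]
    {C : Set Ω} (hC : MeasurableSet[mΩ] C)
    {p : Ω → ℝ}
    (hMAR : μ[C.indicator (fun _ => (1 : ℝ)) | m'] =ᵐ[μ] p)
    {f : Ω → ℝ} (hf : StronglyMeasurable[m'] f)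
    (hint : Integrable (fun ω => f ω * C.indicator (fun _ => (1 : ℝ)) ω) μ) :
    ∫ ω, f ω * C.indicator (fun _ => (1 : ℝ)) ω ∂μ = ∫ ω, f ω * p ω ∂μ := by
  set ι : Ω → ℝ := C.indicator (fun _ => (1 : ℝ)) with hιdef
  have hι : Integrable ι μ := (integrable_const (1 : ℝ)).indicator hC
  have hint' : Integrable (f * ι) μ := hint
  have h1 : μ[f * ι | m'] =ᵐ[μ] f * μ[ι | m'] :=
    condExp_mul_of_stronglyMeasurable_left hf hint' hι
  have h2 : μ[f * ι | m'] =ᵐ[μ] fun ω => f ω * p ω := by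
    filter_upwards [h1, hMAR] with ω h1ω h2ω
    simp only [Pi.mul_apply] at h1ω ⊢
    rw [h1ω, h2ω]
  calc ∫ ω, f ω * ι ω ∂μ
      = ∫ ω, (μ[f * ι | m']) ω ∂μ := (integral_condExp hm').symm
    _ = ∫ ω, f ω * p ω ∂μ := integral_congr_ae h2

/-- Unconditional inverse-probability-of-censoring-weighting identity: under missing-at-random
censoring with respect to `X` and positivity, the weighted mean of `X` over the uncensored
observations equals the mean of `X`; in particular, if `X` is an unbiased estimating function,
then so is its inverse-probability-of-censoring-weighted version. -/
theorem stmt_10 {Ω : Type*} (𝒢 : MeasurableSpace Ω) {mΩ : MeasurableSpace Ω}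
    (μ : Measure Ω) [IsProbabilityMeasure μ]
    (h𝒢 : 𝒢 ≤ mΩ)
    (C : Set Ω) (hC : MeasurableSet C)
    (X : Ω → ℝ) (hX : Measurable X) (hXbdd : ∃ M, ∀ ω, |X ω| ≤ M)
    (p : Ω → ℝ) (hp : p = μ[C.indicator (fun _ => (1 : ℝ)) | 𝒢])
    (hMAR : μ[C.indicator (fun _ => (1 : ℝ)) | 𝒢 ⊔ MeasurableSpace.comap X inferInstance]
      =ᵐ[μ] p)
    (hpos : ∀ᵐ ω ∂μ, 0 < p ω) :
    ∫ ω, (C.indicator (fun _ => (1 : ℝ)) ω / p ω) * X ω ∂μ = ∫ ω, X ω ∂μ ∧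
      (∫ ω, X ω ∂μ = 0 → ∫ ω, (C.indicator (fun _ => (1 : ℝ)) ω / p ω) * X ω ∂μ = 0) := by
  obtain ⟨M₀, hM₀⟩ := hXbdd
  set M := max M₀ 0 with hMdef
  have hMX : ∀ ω, |X ω| ≤ M := fun ω => (hM₀ ω).trans (le_max_left _ _)
  set ι := C.indicator (fun _ => (1 : ℝ)) with hιdef
  set m' := 𝒢 ⊔ MeasurableSpace.comap X inferInstance with hm'def
  have hm' : m' ≤ mΩ := sup_le h𝒢 (measurable_iff_comap_le.mp hX)
  have hCΩ : MeasurableSet[mΩ] C := hC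
  have hXΩ : Measurable[mΩ] X := hX
  have hXm' : Measurable[m'] X := Measurable.of_comap_le le_sup_right
  have hpSM : StronglyMeasurable[m'] p := by
    rw [hp]; exact stronglyMeasurable_condExp.mono le_sup_left
  have hpM : Measurable[m'] p := hpSM.measurable
  have hpMΩ : Measurable[mΩ] p := hpM.mono hm' le_rfl
  have hιM : Measurable[mΩ] ι := by exact measurable_const.indicator hCΩ
  have hιnn : ∀ ω, 0 ≤ ι ω := fun ω => Set.indicator_nonneg (fun _ _ => zero_le_one) ω
  have hι1 : ∀ ω, ι ω ≤ 1 := fun ω => Set.indicator_le_self' (fun _ _ => zero_le_one) ω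
  -- Step 1 : Integrable (fun ω => ι ω / p ω)
  set F : Ω → ℝ := fun ω => ι ω / p ω with hFdef
  have hFmeas : Measurable[mΩ] F := hιM.div hpMΩ
  set g : ℕ → Ω → ℝ := fun n ω => min (1 / p ω) n * ι ω with hgdef
  have hfnSM : ∀ n : ℕ, StronglyMeasurable[m'] (fun ω => min (1 / p ω) (n : ℝ)) := fun n =>
    ((measurable_const.div hpM).min measurable_const).stronglyMeasurable
  have hgmeas : ∀ n : ℕ, Measurable[mΩ] (g n) := fun n =>
    (((hfnSM n).measurable.mono hm' le_rfl)).mul hιM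
  have hgint : ∀ n : ℕ, Integrable (g n) μ := by
    intro n
    refine Integrable.mono' (integrable_const (n : ℝ)) (hgmeas n).aestronglyMeasurable ?_
    filter_upwards [hpos] with ω hω
    have h1 : 0 ≤ min (1 / p ω) (n : ℝ) := le_min (by positivity) n.cast_nonneg
    rw [Real.norm_eq_abs, show |g n ω| = min (1 / p ω) (n : ℝ) * ι ω from
      abs_of_nonneg (mul_nonneg h1 (hιnn ω))]
    calc min (1 / p ω) (n : ℝ) * ι ω ≤ (n : ℝ) * 1 :=
          mul_le_mul (min_le_right _ _) (hι1 ω) (hιnn ω) n.cast_nonneg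
      _ = n := mul_one _
  have hgval : ∀ n : ℕ, ∫ ω, g n ω ∂μ ≤ 1 := by
    intro n
    have key := aux_pullout hm' μ hCΩ hMAR (hfnSM n) (hgint n)
    calc ∫ ω, g n ω ∂μ
        = ∫ ω, min (1 / p ω) (n : ℝ) * p ω ∂μ := key
      _ ≤ ∫ _ω, (1 : ℝ) ∂μ := by
          refine integral_mono_ae ?_ (integrable_const 1) ?_
          · refine Integrable.mono' (integrable_const (1 : ℝ))
              ((((hfnSM n).measurable.mono hm' le_rfl).mul hpMΩ).aestronglyMeasurable) ?_
            filter_upwards [hpos] with ω hω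
            have h1 : 0 ≤ min (1 / p ω) (n : ℝ) := le_min (by positivity) n.cast_nonneg
            rw [Real.norm_eq_abs, abs_of_nonneg (mul_nonneg h1 hω.le)]
            calc min (1 / p ω) (n : ℝ) * p ω ≤ (1 / p ω) * p ω :=
                  mul_le_mul_of_nonneg_right (min_le_left _ _) hω.le
              _ = 1 := one_div_mul_cancel hω.ne'
          · filter_upwards [hpos] with ω hω
            calc min (1 / p ω) (n : ℝ) * p ω ≤ (1 / p ω) * p ω :=
                  mul_le_mul_of_nonneg_right (min_le_left _ _) hω.le
              _ = 1 := one_div_mul_cancel hω.ne'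
      _ = 1 := by simp
  have hFlim : ∀ᵐ ω ∂μ, Filter.Tendsto (fun n : ℕ => g n ω) Filter.atTop (nhds (F ω)) := by
    filter_upwards [hpos] with ω hω
    have hev : (fun _ : ℕ => F ω) =ᶠ[Filter.atTop] fun n : ℕ => g n ω := by
      filter_upwards [Filter.eventually_ge_atTop (⌈1 / p ω⌉₊)] with n hn
      have h1 : min (1 / p ω) (n : ℝ) = 1 / p ω :=
        min_eq_left ((Nat.le_ceil _).trans (Nat.cast_le.mpr hn))
      show F ω = min (1 / p ω) (n : ℝ) * ι ω
      rw [h1]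
      show ι ω / p ω = 1 / p ω * ι ω
      ring
    exact Filter.Tendsto.congr' hev tendsto_const_nhds
  have hFint : Integrable F μ := by
    refine ⟨hFmeas.aestronglyMeasurable, ?_⟩
    have hbound : ∫⁻ ω, ENNReal.ofReal (F ω) ∂μ ≤ 1 := by
      have hliminf : ∀ᵐ ω ∂μ, ENNReal.ofReal (F ω)
          = Filter.liminf (fun n : ℕ => ENNReal.ofReal (g n ω)) Filter.atTop := by
        filter_upwards [hFlim] with ω hω
        exact ((ENNReal.tendsto_ofReal hω).liminf_eq).symm
      calc ∫⁻ ω, ENNReal.ofReal (F ω) ∂μ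
          = ∫⁻ ω, Filter.liminf (fun n : ℕ => ENNReal.ofReal (g n ω)) Filter.atTop ∂μ :=
            lintegral_congr_ae hliminf
        _ ≤ Filter.liminf (fun n : ℕ => ∫⁻ ω, ENNReal.ofReal (g n ω) ∂μ) Filter.atTop :=
            lintegral_liminf_le fun n => (hgmeas n).ennreal_ofReal
        _ ≤ 1 := by
            refine Filter.liminf_le_of_frequently_le'
              (Filter.Frequently.of_forall fun n => ?_)
            have hnn : 0 ≤ᵐ[μ] g n := by
              filter_upwards [hpos] with ω hω
              exact mul_nonneg (le_min (by positivity) n.cast_nonneg) (hιnn ω)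
            rw [← ofReal_integral_eq_lintegral_ofReal (hgint n) hnn]
            calc ENNReal.ofReal (∫ ω, g n ω ∂μ) ≤ ENNReal.ofReal 1 :=
                  ENNReal.ofReal_le_ofReal (hgval n)
              _ = 1 := ENNReal.ofReal_one
    have hnorm : ∫⁻ ω, ‖F ω‖ₑ ∂μ = ∫⁻ ω, ENNReal.ofReal (F ω) ∂μ := by
      refine lintegral_congr_ae ?_
      filter_upwards [hpos] with ω hω
      exact Real.enorm_eq_ofReal (div_nonneg (hιnn ω) hω.le)
    rw [HasFiniteIntegral, hnorm]
    exact lt_of_le_of_lt hbound ENNReal.one_lt_top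
  -- Step 2 : Integrable (fun ω => (X ω / p ω) * ι ω)
  have hmain_int : Integrable (fun ω => X ω / p ω * ι ω) μ := by
    refine Integrable.mono' (hFint.const_mul M)
      (((hXΩ.div hpMΩ).mul hιM).aestronglyMeasurable) ?_
    filter_upwards [hpos] with ω hω
    have hFnn : 0 ≤ F ω := div_nonneg (hιnn ω) hω.le
    have hrw : X ω / p ω * ι ω = X ω * F ω := by
      simp only [hFdef]; ring
    rw [hrw, Real.norm_eq_abs, abs_mul, abs_of_nonneg hFnn]
    exact mul_le_mul_of_nonneg_right (hMX ω) hFnn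
  -- main identity
  have hpull := aux_pullout hm' μ hCΩ hMAR ((hXm'.div hpM).stronglyMeasurable) hmain_int
  have hmain : ∫ ω, ι ω / p ω * X ω ∂μ = ∫ ω, X ω ∂μ := by
    calc ∫ ω, ι ω / p ω * X ω ∂μ
        = ∫ ω, X ω / p ω * ι ω ∂μ := by
          refine integral_congr_ae (Filter.Eventually.of_forall fun ω => ?_)
          ring
      _ = ∫ ω, X ω / p ω * p ω ∂μ := hpull
      _ = ∫ ω, X ω ∂μ := by
          refine integral_congr_ae ?_
          filter_upwards [hpos] with ω hω
          exact div_mul_cancel₀ _ hω.ne'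
  exact ⟨hmain, fun h0 => hmain.trans h0⟩
end

section
/- Let (Ω, ℱ, μ) be a probability space and let G, G★ : Ω → ℝ^p be random vectors with all coordinates in L²(μ) and mean zero (∫ G dμ = 0 and ∫ G★ dμ = 0). Suppose V★ = (∫ G★ᵢ G★ⱼ dμ)_{i,j} is positive definite and that the p × p matrix D = (∫ Gᵢ G★ⱼ dμ)_{i,j} is invertible. Then the matrix D⁻¹ (∫ Gᵢ Gⱼ dμ)_{i,j} (D⁻¹)ᵀ − V★⁻¹ is positive semidefinite; that is, the sandwich matrix D⁻¹ E[G Gᵀ] D⁻ᵀ is bounded below in the positive-semidefinite order by E[G★ G★ᵀ]⁻¹, the sandwich matrix attained by G★ itself. -/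
/-!
Fix `x` and put `a = D⁻ᵀ x`, `b = V★⁻¹ x`, `u = aᵀ G`, `v = bᵀ G★`. Pointwise AM-GM gives
`2 E[u v] ≤ E[u²] + E[v²]`, and since `D = E[G G★ᵀ]` this reads
`2 xᵀ V★⁻¹ x ≤ xᵀ D⁻¹ E[G Gᵀ] D⁻ᵀ x + xᵀ V★⁻¹ x`, which is the claim.
-/

open MeasureTheory Matrix

namespace Matrix

variable {n : Type*} [Fintype n] [DecidableEq n]

theorem posSemidef_inv_mul_mul_inv_transpose_sub_inv {A B C : Matrix n n ℝ}
    (hA : A.IsHermitian) (hB : IsUnit B) (hC : C.IsHermitian) (hCu : IsUnit C)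
    (h : ∀ a b, 2 * (a ⬝ᵥ B *ᵥ b) ≤ a ⬝ᵥ A *ᵥ a + b ⬝ᵥ C *ᵥ b) :
    (B⁻¹ * A * B⁻¹ᵀ - C⁻¹).PosSemidef := by
  have hBdet := (isUnit_iff_isUnit_det B).mp hB
  have hCdet := (isUnit_iff_isUnit_det C).mp hCu
  refine posSemidef_iff_dotProduct_mulVec.mpr ⟨?_, fun x => ?_⟩
  · refine IsHermitian.sub ?_ hC.inv
    have hAt : Aᵀ = A := by simpa [conjTranspose_eq_transpose_of_trivial] using hA.eq
    simp [IsHermitian, conjTranspose_eq_transpose_of_trivial, transpose_mul, Matrix.mul_assoc, hAt]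
  · have hAx : B⁻¹ᵀ *ᵥ x ⬝ᵥ A *ᵥ (B⁻¹ᵀ *ᵥ x) = x ⬝ᵥ (B⁻¹ * A * B⁻¹ᵀ) *ᵥ x := by
      rw [mulVec_transpose, ← dotProduct_mulVec, ← mulVec_mulVec, ← mulVec_mulVec,
        mulVec_transpose]
    have hBx : B⁻¹ᵀ *ᵥ x ⬝ᵥ B *ᵥ (C⁻¹ *ᵥ x) = x ⬝ᵥ C⁻¹ *ᵥ x := by
      rw [mulVec_transpose, ← dotProduct_mulVec, mulVec_mulVec, nonsing_inv_mul B hBdet,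
        one_mulVec]
    have hCx : C⁻¹ *ᵥ x ⬝ᵥ C *ᵥ (C⁻¹ *ᵥ x) = x ⬝ᵥ C⁻¹ *ᵥ x := by
      rw [mulVec_mulVec, mul_nonsing_inv C hCdet, one_mulVec, dotProduct_comm]
    have hx := h (B⁻¹ᵀ *ᵥ x) (C⁻¹ *ᵥ x)
    rw [hAx, hBx, hCx] at hx
    simp only [star_trivial, sub_mulVec, dotProduct_sub]
    linarith

end Matrix

namespace MeasureTheory

variable {Ω ι κ : Type*} {mΩ : MeasurableSpace Ω} {μ : Measure Ω}

noncomputable def crossMoment (μ : Measure Ω) (X : Ω → ι → ℝ) (Y : Ω → κ → ℝ) : Matrix ι κ ℝ :=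
  fun i j => ∫ ω, X ω i * Y ω j ∂μ

theorem crossMoment_transpose (X : Ω → ι → ℝ) (Y : Ω → κ → ℝ) :
    (crossMoment μ X Y)ᵀ = crossMoment μ Y X := by
  ext i j
  simp only [transpose_apply, crossMoment, mul_comm]

theorem isHermitian_crossMoment_self (X : Ω → ι → ℝ) : (crossMoment μ X X).IsHermitian := by
  rw [IsHermitian, conjTranspose_eq_transpose_of_trivial, crossMoment_transpose]

theorem memLp_dotProduct [Fintype ι] {X : Ω → ι → ℝ} (hX : ∀ i, MemLp (fun ω => X ω i) 2 μ)
    (a : ι → ℝ) :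
    MemLp (fun ω => a ⬝ᵥ X ω) 2 μ :=
  memLp_finsetSum _ fun i _ => (hX i).const_mul (a i)

theorem dotProduct_crossMoment_mulVec [Fintype ι] [Fintype κ] {X : Ω → ι → ℝ} {Y : Ω → κ → ℝ}
    (hX : ∀ i, MemLp (fun ω => X ω i) 2 μ) (hY : ∀ j, MemLp (fun ω => Y ω j) 2 μ)
    (a : ι → ℝ) (b : κ → ℝ) :
    a ⬝ᵥ crossMoment μ X Y *ᵥ b = ∫ ω, (a ⬝ᵥ X ω) * (b ⬝ᵥ Y ω) ∂μ := by
  have hXY : ∀ i j, Integrable (fun ω => a i * b j * (X ω i * Y ω j)) μ :=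
    fun i j => ((hX i).integrable_mul (hY j)).const_mul _
  have hexpand : ∀ ω, (a ⬝ᵥ X ω) * (b ⬝ᵥ Y ω) = ∑ i, ∑ j, a i * b j * (X ω i * Y ω j) := by
    intro ω
    simp only [dotProduct, Finset.sum_mul_sum]
    exact Finset.sum_congr rfl fun i _ => Finset.sum_congr rfl fun j _ => by ring
  rw [integral_congr_ae (ae_of_all _ hexpand),
    integral_finsetSum _ fun i _ => integrable_finsetSum _ fun j _ => hXY i j]
  simp only [integral_finsetSum _ fun j _ => hXY _ j, integral_const_mul, dotProduct, mulVec,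
    crossMoment, Finset.mul_sum]
  exact Finset.sum_congr rfl fun i _ => Finset.sum_congr rfl fun j _ => by ring

theorem two_mul_dotProduct_crossMoment_mulVec_le [Fintype ι] [Fintype κ] {X : Ω → ι → ℝ}
    {Y : Ω → κ → ℝ} (hX : ∀ i, MemLp (fun ω => X ω i) 2 μ) (hY : ∀ j, MemLp (fun ω => Y ω j) 2 μ)
    (a : ι → ℝ) (b : κ → ℝ) :
    2 * (a ⬝ᵥ crossMoment μ X Y *ᵥ b) ≤
      a ⬝ᵥ crossMoment μ X X *ᵥ a + b ⬝ᵥ crossMoment μ Y Y *ᵥ b := by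
  have hu := memLp_dotProduct hX a
  have hv := memLp_dotProduct hY b
  have huu : Integrable (fun ω => (a ⬝ᵥ X ω) * (a ⬝ᵥ X ω)) μ := hu.integrable_mul hu
  have hvv : Integrable (fun ω => (b ⬝ᵥ Y ω) * (b ⬝ᵥ Y ω)) μ := hv.integrable_mul hv
  have huv : Integrable (fun ω => (a ⬝ᵥ X ω) * (b ⬝ᵥ Y ω)) μ := hu.integrable_mul hv
  rw [dotProduct_crossMoment_mulVec hX hY, dotProduct_crossMoment_mulVec hX hX,
    dotProduct_crossMoment_mulVec hY hY, ← integral_const_mul, ← integral_add huu hvv]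
  refine integral_mono (huv.const_mul 2) (huu.add hvv) fun ω => ?_
  simpa only [mul_assoc, sq] using two_mul_le_add_sq (a ⬝ᵥ X ω) (b ⬝ᵥ Y ω)

end MeasureTheory

theorem stmt_15_general {Ω : Type*} {mΩ : MeasurableSpace Ω}
    (μ : Measure Ω)
    (p : ℕ) (G Gstar : Ω → Fin p → ℝ)
    (hG : ∀ i, MemLp (fun ω => G ω i) 2 μ) (hGstar : ∀ i, MemLp (fun ω => Gstar ω i) 2 μ)
    (Vstar : Matrix (Fin p) (Fin p) ℝ)
    (hVstar : Vstar = fun i j => ∫ ω, Gstar ω i * Gstar ω j ∂μ)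
    (D : Matrix (Fin p) (Fin p) ℝ) (hD : D = fun i j => ∫ ω, G ω i * Gstar ω j ∂μ)
    (Vg : Matrix (Fin p) (Fin p) ℝ) (hVg : Vg = fun i j => ∫ ω, G ω i * G ω j ∂μ)
    (hVstarPos : Vstar.PosDef) (hDinv : IsUnit D) :
    (D⁻¹ * Vg * (D⁻¹)ᵀ - Vstar⁻¹).PosSemidef := by
  obtain rfl : Vstar = crossMoment μ Gstar Gstar := hVstar
  obtain rfl : D = crossMoment μ G Gstar := hD
  obtain rfl : Vg = crossMoment μ G G := hVg
  exact posSemidef_inv_mul_mul_inv_transpose_sub_inv (isHermitian_crossMoment_self G) hDinv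
    hVstarPos.isHermitian hVstarPos.isUnit (two_mul_dotProduct_crossMoment_mulVec_le hG hGstar)

/-- Optimality of the estimating function `G★`: if the second-moment matrix `V★ = E[G★ G★ᵀ]` is
positive definite and `D = E[G G★ᵀ]` is invertible, then the sandwich matrix
`D⁻¹ E[G Gᵀ] D⁻ᵀ` dominates `V★⁻¹` in the positive-semidefinite order. -/
theorem stmt_15 {Ω : Type*} {mΩ : MeasurableSpace Ω}
    (μ : Measure Ω) [IsProbabilityMeasure μ]
    (p : ℕ) (G Gstar : Ω → Fin p → ℝ)
    (hG : ∀ i, MemLp (fun ω => G ω i) 2 μ) (hGstar : ∀ i, MemLp (fun ω => Gstar ω i) 2 μ)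
    (hGmean : ∀ i, ∫ ω, G ω i ∂μ = 0) (hGstarmean : ∀ i, ∫ ω, Gstar ω i ∂μ = 0)
    (Vstar : Matrix (Fin p) (Fin p) ℝ)
    (hVstar : Vstar = fun i j => ∫ ω, Gstar ω i * Gstar ω j ∂μ)
    (D : Matrix (Fin p) (Fin p) ℝ) (hD : D = fun i j => ∫ ω, G ω i * Gstar ω j ∂μ)
    (Vg : Matrix (Fin p) (Fin p) ℝ) (hVg : Vg = fun i j => ∫ ω, G ω i * G ω j ∂μ)
    (hVstarPos : Vstar.PosDef) (hDinv : IsUnit D) :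
    (D⁻¹ * Vg * (D⁻¹)ᵀ - Vstar⁻¹).PosSemidef :=
  stmt_15_general (mΩ := mΩ) μ p G Gstar hG hGstar Vstar hVstar D hD Vg hVg hVstarPos hDinv
end
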